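/- arXiv:1205.0398 — 6 statements merged into one kernel-verified Lean document; each statement's English description precedes it below -/
import Mathlib

section
/- For nonzero polynomials f, g over a field K with a non-Archimedean valuation v, the tropicalisation of the product satisfies Trop(fg)(ξ) = Trop(f)(ξ) + Trop(g)(ξ) for all ξ ∈ ℝ^m, where Trop(f)(ξ) = min over monomials c_α x^α of f of (v(c_α) + ξ·α). -/
/-!
The inequality `Trop(f) + Trop(g) ≤ Trop(fg)` is the ultrametric inequality applied to each
coefficient `Σ_{α + β = γ} c_α d_β` of `fg`. For the reverse inequality, pick exponents `α₀` of
`f` and `β₀` of `g` attaining the minima and lexicographically least among the minimisers.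
Then in the coefficient of `x^(α₀ + β₀)` in `fg` the term `c_α₀ d_β₀` has strictly smaller
valuation than every other term, so the coefficient is nonzero with valuation `v(c_α₀ d_β₀)`:
a term `c_α d_β` of no larger valuation would make `α`, `β` minimisers as well, and then
`α + β = α₀ + β₀` together with `α₀ ≤ α`, `β₀ ≤ β` lexicographically forces `α = α₀`, `β = β₀`.
-/

open MvPolynomial

/-- The tropicalisation of a polynomial `f = Σ_α c_α x^α` with respect to a valuation
`v` on the coefficients: `Trop(f)(ξ) = min_{α : c_α ≠ 0} (v(c_α) + ξ·α)`.
(Defined as `0` for the zero polynomial.) -/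
noncomputable def Trop {K : Type*} [CommRing K] {m : ℕ} (v : K → ℝ)
    (f : MvPolynomial (Fin m) K) (ξ : Fin m → ℝ) : ℝ :=
  if h : f.support.Nonempty then
    f.support.inf' h (fun α => v (f.coeff α) + ∑ j, ξ j * (α j : ℝ))
  else 0

section Ultrametric

variable {K : Type*} [CommRing K] [IsDomain K]

open Classical in
noncomputable def addValuationOfNeZero (v : K → ℝ)
    (hmul : ∀ a b : K, a ≠ 0 → b ≠ 0 → v (a * b) = v a + v b)
    (hadd : ∀ a b : K, a ≠ 0 → b ≠ 0 → a + b ≠ 0 → min (v a) (v b) ≤ v (a + b)) :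
    AddValuation K (WithTop ℝ) :=
  AddValuation.of (fun a => if a = 0 then ⊤ else (v a : WithTop ℝ)) (if_pos rfl)
    (by
      have h := hmul 1 1 one_ne_zero one_ne_zero
      rw [mul_one, left_eq_add] at h
      simp [h])
    (by
      intro a b
      by_cases ha : a = 0
      · simp [ha]
      by_cases hb : b = 0
      · simp [hb]
      by_cases hab : a + b = 0
      · simp [hab]
      simpa [ha, hb, hab] using hadd a b ha hb hab)
    (by
      intro a b
      by_cases ha : a = 0
      · simp [ha]
      by_cases hb : b = 0
      · simp [hb]
      simp [ha, hb, hmul a b ha hb, WithTop.coe_add])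

variable {v : K → ℝ}

lemma addValuationOfNeZero_of_ne_zero
    (hmul : ∀ a b : K, a ≠ 0 → b ≠ 0 → v (a * b) = v a + v b)
    (hadd : ∀ a b : K, a ≠ 0 → b ≠ 0 → a + b ≠ 0 → min (v a) (v b) ≤ v (a + b))
    {a : K} (ha : a ≠ 0) : addValuationOfNeZero v hmul hadd a = v a := by
  simp [addValuationOfNeZero, ha]

lemma le_val_sum
    (hmul : ∀ a b : K, a ≠ 0 → b ≠ 0 → v (a * b) = v a + v b)
    (hadd : ∀ a b : K, a ≠ 0 → b ≠ 0 → a + b ≠ 0 → min (v a) (v b) ≤ v (a + b))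
    {ι : Type*} {s : Finset ι} {a : ι → K} {c : ℝ} (hsum : ∑ i ∈ s, a i ≠ 0)
    (h : ∀ i ∈ s, a i ≠ 0 → c ≤ v (a i)) : c ≤ v (∑ i ∈ s, a i) := by
  set w := addValuationOfNeZero v hmul hadd
  have hw : (c : WithTop ℝ) ≤ w (∑ i ∈ s, a i) := w.map_le_sum fun i hi => by
    by_cases hai : a i = 0
    · simp [w, addValuationOfNeZero, hai]
    · rw [addValuationOfNeZero_of_ne_zero hmul hadd hai]
      exact WithTop.coe_le_coe.2 (h i hi hai)
  rwa [addValuationOfNeZero_of_ne_zero hmul hadd hsum, WithTop.coe_le_coe] at hw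

lemma val_sum_eq_of_lt
    (hmul : ∀ a b : K, a ≠ 0 → b ≠ 0 → v (a * b) = v a + v b)
    (hadd : ∀ a b : K, a ≠ 0 → b ≠ 0 → a + b ≠ 0 → min (v a) (v b) ≤ v (a + b))
    {ι : Type*} [DecidableEq ι] {s : Finset ι} {a : ι → K} {i₀ : ι} (hi₀ : i₀ ∈ s)
    (h₀ : a i₀ ≠ 0) (hlt : ∀ i ∈ s, i ≠ i₀ → a i ≠ 0 → v (a i₀) < v (a i)) :
    ∑ i ∈ s, a i ≠ 0 ∧ v (∑ i ∈ s, a i) = v (a i₀) := by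
  set w := addValuationOfNeZero v hmul hadd
  have hw₀ : w (a i₀) = v (a i₀) := addValuationOfNeZero_of_ne_zero hmul hadd h₀
  have hw : w (∑ i ∈ s, a i) = v (a i₀) := by
    rw [← Finset.add_sum_erase s a hi₀, w.map_add_eq_of_lt_left, hw₀]
    refine hw₀ ▸ w.map_lt_sum (g := (v (a i₀) : WithTop ℝ)) WithTop.coe_ne_top fun i hi => ?_
    by_cases hai : a i = 0
    · simp [w, addValuationOfNeZero, hai]
    · rw [addValuationOfNeZero_of_ne_zero hmul hadd hai]
      exact WithTop.coe_lt_coe.2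
        (hlt i (Finset.mem_of_mem_erase hi) (Finset.ne_of_mem_erase hi) hai)
  have hsum : ∑ i ∈ s, a i ≠ 0 := fun h => by simp [h] at hw
  rw [addValuationOfNeZero_of_ne_zero hmul hadd hsum, WithTop.coe_inj] at hw
  exact ⟨hsum, hw⟩

end Ultrametric

section Tropicalisation

variable {K : Type*} [CommRing K] {m : ℕ} {v : K → ℝ} {ξ : Fin m → ℝ}
  {f g : MvPolynomial (Fin m) K}

noncomputable def tropTerm (v : K → ℝ) (f : MvPolynomial (Fin m) K) (ξ : Fin m → ℝ)
    (α : Fin m →₀ ℕ) : ℝ :=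
  v (f.coeff α) + ∑ j, ξ j * (α j : ℝ)

lemma trop_le_tropTerm {α : Fin m →₀ ℕ} (hα : α ∈ f.support) :
    Trop v f ξ ≤ tropTerm v f ξ α := by
  rw [Trop, dif_pos ⟨α, hα⟩]
  exact Finset.inf'_le _ hα

lemma le_trop {c : ℝ} (hf : f ≠ 0) (h : ∀ α ∈ f.support, c ≤ tropTerm v f ξ α) :
    c ≤ Trop v f ξ := by
  rw [Trop, dif_pos (support_nonempty.2 hf)]
  exact Finset.le_inf' _ _ h

lemma tropTerm_mul_add (hmul : ∀ a b : K, a ≠ 0 → b ≠ 0 → v (a * b) = v a + v b)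
    {α β : Fin m →₀ ℕ} (hα : f.coeff α ≠ 0) (hβ : g.coeff β ≠ 0) :
    v (f.coeff α * g.coeff β) + ∑ j, ξ j * ((α + β) j : ℝ) =
      tropTerm v f ξ α + tropTerm v g ξ β := by
  simp only [tropTerm, hmul _ _ hα hβ, Finsupp.add_apply, Nat.cast_add, mul_add,
    Finset.sum_add_distrib]
  ring

noncomputable def tropKey (v : K → ℝ) (f : MvPolynomial (Fin m) K) (ξ : Fin m → ℝ)
    (α : Fin m →₀ ℕ) : ℝ ×ₗ Lex (Fin m →₀ ℕ) :=
  toLex (tropTerm v f ξ α, toLex α)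

lemma tropKey_add (hmul : ∀ a b : K, a ≠ 0 → b ≠ 0 → v (a * b) = v a + v b)
    {α β : Fin m →₀ ℕ} (hα : f.coeff α ≠ 0) (hβ : g.coeff β ≠ 0) :
    tropKey v f ξ α + tropKey v g ξ β =
      toLex (v (f.coeff α * g.coeff β) + ∑ j, ξ j * ((α + β) j : ℝ), toLex (α + β)) := by
  rw [tropTerm_mul_add hmul hα hβ]
  rfl

lemma trop_eq_tropTerm_of_tropKey_le {α₀ : Fin m →₀ ℕ} (hα₀ : α₀ ∈ f.support)
    (hmin : ∀ α ∈ f.support, tropKey v f ξ α₀ ≤ tropKey v f ξ α) :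
    Trop v f ξ = tropTerm v f ξ α₀ := by
  refine le_antisymm (trop_le_tropTerm hα₀) (le_trop (support_nonempty.1 ⟨α₀, hα₀⟩) fun α hα => ?_)
  rcases Prod.Lex.toLex_le_toLex.1 (hmin α hα) with hlt | ⟨heq, -⟩
  exacts [hlt.le, heq.le]

end Tropicalisation

section GaussLemma

open Finset.HasAntidiagonal

variable {K : Type*} [CommRing K] [IsDomain K] {m : ℕ} {v : K → ℝ} {ξ : Fin m → ℝ}
  {f g : MvPolynomial (Fin m) K}

lemma trop_add_trop_le_tropTerm_mul
    (hmul : ∀ a b : K, a ≠ 0 → b ≠ 0 → v (a * b) = v a + v b)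
    (hadd : ∀ a b : K, a ≠ 0 → b ≠ 0 → a + b ≠ 0 → min (v a) (v b) ≤ v (a + b))
    {γ : Fin m →₀ ℕ} (hγ : (f * g).coeff γ ≠ 0) :
    Trop v f ξ + Trop v g ξ ≤ tropTerm v (f * g) ξ γ := by
  rw [coeff_mul] at hγ
  have hval : Trop v f ξ + Trop v g ξ - ∑ j, ξ j * (γ j : ℝ) ≤
      v (∑ p ∈ antidiagonal γ, f.coeff p.1 * g.coeff p.2) := by
    refine le_val_sum hmul hadd hγ fun p hp hp₀ => ?_
    have h₁ : f.coeff p.1 ≠ 0 := left_ne_zero_of_mul hp₀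
    have h₂ : g.coeff p.2 ≠ 0 := right_ne_zero_of_mul hp₀
    have hsum := tropTerm_mul_add (ξ := ξ) hmul h₁ h₂
    rw [mem_antidiagonal.1 hp] at hsum
    linarith [trop_le_tropTerm (v := v) (ξ := ξ) (mem_support_iff.2 h₁),
      trop_le_tropTerm (v := v) (ξ := ξ) (mem_support_iff.2 h₂)]
  rw [tropTerm, coeff_mul]
  linarith

lemma coeff_mul_ne_zero_and_val_eq_of_tropKey_le
    (hmul : ∀ a b : K, a ≠ 0 → b ≠ 0 → v (a * b) = v a + v b)
    (hadd : ∀ a b : K, a ≠ 0 → b ≠ 0 → a + b ≠ 0 → min (v a) (v b) ≤ v (a + b))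
    {α₀ β₀ : Fin m →₀ ℕ} (hα₀ : α₀ ∈ f.support) (hβ₀ : β₀ ∈ g.support)
    (hf : ∀ α ∈ f.support, tropKey v f ξ α₀ ≤ tropKey v f ξ α)
    (hg : ∀ β ∈ g.support, tropKey v g ξ β₀ ≤ tropKey v g ξ β) :
    (f * g).coeff (α₀ + β₀) ≠ 0 ∧
      v ((f * g).coeff (α₀ + β₀)) = v (f.coeff α₀ * g.coeff β₀) := by
  rw [mem_support_iff] at hα₀ hβ₀
  rw [coeff_mul]
  refine val_sum_eq_of_lt hmul hadd (i₀ := (α₀, β₀)) (mem_antidiagonal.2 rfl)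
    (mul_ne_zero hα₀ hβ₀) fun p hp hne hp₀ => ?_
  have h₁ : f.coeff p.1 ≠ 0 := left_ne_zero_of_mul hp₀
  have h₂ : g.coeff p.2 ≠ 0 := right_ne_zero_of_mul hp₀
  have hle₁ := hf p.1 (mem_support_iff.2 h₁)
  have hle₂ := hg p.2 (mem_support_iff.2 h₂)
  have hlt : tropKey v f ξ α₀ + tropKey v g ξ β₀ < tropKey v f ξ p.1 + tropKey v g ξ p.2 := by
    refine lt_of_le_of_ne (add_le_add hle₁ hle₂) fun heq => hne ?_
    obtain ⟨heq₁, heq₂⟩ := (add_eq_add_iff_eq_and_eq hle₁ hle₂).1 heq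
    simp only [tropKey, toLex_inj, Prod.mk.injEq] at heq₁ heq₂
    exact Prod.ext heq₁.2.symm heq₂.2.symm
  rw [tropKey_add hmul hα₀ hβ₀, tropKey_add hmul h₁ h₂, mem_antidiagonal.1 hp,
    Prod.Lex.toLex_lt_toLex] at hlt
  rcases hlt with hlt | ⟨-, hlt⟩
  · exact lt_of_add_lt_add_right hlt
  · exact absurd hlt (lt_irrefl _)

lemma trop_mul_le
    (hmul : ∀ a b : K, a ≠ 0 → b ≠ 0 → v (a * b) = v a + v b)
    (hadd : ∀ a b : K, a ≠ 0 → b ≠ 0 → a + b ≠ 0 → min (v a) (v b) ≤ v (a + b))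
    (hf : f ≠ 0) (hg : g ≠ 0) : Trop v (f * g) ξ ≤ Trop v f ξ + Trop v g ξ := by
  obtain ⟨α₀, hα₀, hminf⟩ := f.support.exists_min_image (tropKey v f ξ) (support_nonempty.2 hf)
  obtain ⟨β₀, hβ₀, hming⟩ := g.support.exists_min_image (tropKey v g ξ) (support_nonempty.2 hg)
  obtain ⟨hne, hval⟩ :=
    coeff_mul_ne_zero_and_val_eq_of_tropKey_le hmul hadd hα₀ hβ₀ hminf hming
  calc Trop v (f * g) ξ ≤ tropTerm v (f * g) ξ (α₀ + β₀) :=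
        trop_le_tropTerm (mem_support_iff.2 hne)
    _ = tropTerm v f ξ α₀ + tropTerm v g ξ β₀ := by
        rw [tropTerm, hval, tropTerm_mul_add hmul (mem_support_iff.1 hα₀) (mem_support_iff.1 hβ₀)]
    _ = Trop v f ξ + Trop v g ξ := by
        rw [trop_eq_tropTerm_of_tropKey_le hα₀ hminf, trop_eq_tropTerm_of_tropKey_le hβ₀ hming]

end GaussLemma

/-- Tropical Gauss's Lemma: for nonzero polynomials `f, g` over a field with a
non-Archimedean valuation `v`, `Trop(fg)(ξ) = Trop(f)(ξ) + Trop(g)(ξ)`. -/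
theorem trop_mul {K : Type*} [Field K] {m : ℕ} (v : K → ℝ)
    (hmul : ∀ a b : K, a ≠ 0 → b ≠ 0 → v (a * b) = v a + v b)
    (hadd : ∀ a b : K, a ≠ 0 → b ≠ 0 → a + b ≠ 0 → min (v a) (v b) ≤ v (a + b))
    (f g : MvPolynomial (Fin m) K) (hf : f ≠ 0) (hg : g ≠ 0) (ξ : Fin m → ℝ) :
    Trop v (f * g) ξ = Trop v f ξ + Trop v g ξ :=
  le_antisymm (trop_mul_le hmul hadd hf hg)
    (le_trop (mul_ne_zero hf hg) fun _ hγ =>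
      trop_add_trop_le_tropTerm_mul hmul hadd (mem_support_iff.1 hγ))
end

section
/- Let φ̃ = (g̃, f̃_1, …, f̃_n) be a degree-d homogenisation of the rational map φ = (f_1/g, …, f_n/g). Then the image of Trop(φ̃) : ℝ^{m+1} → ℝ^{n+1} equals {0} × im(Trop(φ)) + ℝ·(1,…,1), where Trop(φ) : ℝ^m → ℝ^n has components Trop(f_i) − Trop(g). -/
open MvPolynomial

/-- The degree-`d` homogenisation `g̃(x_0,…,x_m) = x_0^d · g(x_1/x_0, …, x_m/x_0)`. -/
noncomputable def homogenise {K : Type*} [CommRing K] {m : ℕ} (d : ℕ)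
    (g : MvPolynomial (Fin m) K) : MvPolynomial (Fin (m + 1)) K :=
  ∑ α ∈ g.support,
    monomial (Finsupp.equivFunOnFinite.symm
        (Fin.cons (d - α.sum fun _ e => e) (fun j => α j)))
      (g.coeff α)

/-- The tropicalisation of the rational map `φ = (f_1/g, …, f_n/g)`:
componentwise `Trop(f_i) − Trop(g)`. -/
noncomputable def tropMap {K : Type*} [CommRing K] {m n : ℕ} (v : K → ℝ)
    (f : Fin n → MvPolynomial (Fin m) K) (g : MvPolynomial (Fin m) K)
    (ξ : Fin m → ℝ) : Fin n → ℝ :=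
  fun i => Trop v (f i) ξ - Trop v g ξ

/-- The tropicalisation of the degree-`d` homogenisation
`φ̃ = (g̃, f̃_1, …, f̃_n)` of `φ`, as a map `ℝ^{m+1} → ℝ^{n+1}`. -/
noncomputable def tropMapHom {K : Type*} [CommRing K] {m n : ℕ} (v : K → ℝ)
    (f : Fin n → MvPolynomial (Fin m) K) (g : MvPolynomial (Fin m) K) (d : ℕ)
    (ξ : Fin (m + 1) → ℝ) : Fin (n + 1) → ℝ :=
  Fin.cons (Trop v (homogenise d g) ξ) (fun i => Trop v (homogenise d (f i)) ξ)

/-!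
Homogenisation sends an exponent `α` of degree at most `d` to `(d - |α|, α)`, so for every
nonzero `h` of degree at most `d`, `Trop(h̃)(ξ) = d ξ₀ + Trop(h)(ξ')` with `ξ'ⱼ = ξⱼ₊₁ - ξ₀`.
Hence `Trop(φ̃)(ξ) = (0, Trop(φ)(ξ')) + (d ξ₀ + Trop(g)(ξ'))·(1,…,1)`; as `d > 0`, moving `ξ₀`
while keeping `ξ'` fixed makes the constant an arbitrary real.
-/

section

variable {K : Type*} [CommRing K] {m : ℕ}

noncomputable def homogeniseExponent (d : ℕ) (α : Fin m →₀ ℕ) : Fin (m + 1) →₀ ℕ :=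
  Finsupp.cons (d - α.degree) α

lemma homogeniseExponent_injective (d : ℕ) :
    Function.Injective (homogeniseExponent (m := m) d) :=
  fun _ _ h => (Finsupp.cons_injective2 h).2

lemma homogenise_eq_sum (d : ℕ) (g : MvPolynomial (Fin m) K) :
    homogenise d g = ∑ α ∈ g.support, monomial (homogeniseExponent d α) (g.coeff α) :=
  rfl

lemma coeff_homogenise (d : ℕ) (g : MvPolynomial (Fin m) K) (α : Fin m →₀ ℕ) :
    (homogenise d g).coeff (homogeniseExponent d α) = g.coeff α := by
  classical
  simp only [homogenise_eq_sum, coeff_sum, coeff_monomial,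
    (homogeniseExponent_injective d).eq_iff, Finset.sum_ite_eq', ite_eq_left_iff]
  exact fun h => (notMem_support_iff.1 h).symm

lemma support_homogenise (d : ℕ) (g : MvPolynomial (Fin m) K) :
    (homogenise d g).support = g.support.image (homogeniseExponent d) := by
  refine Finset.Subset.antisymm ?_ ?_
  · rw [homogenise_eq_sum]
    refine support_sum.trans (Finset.biUnion_subset.2 fun α hα => ?_)
    exact support_monomial_subset.trans
      (Finset.singleton_subset_iff.2 (Finset.mem_image_of_mem _ hα))
  · simp only [Finset.image_subset_iff, mem_support_iff, coeff_homogenise]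
    exact fun _ => id

def dehomogenise {R : Type*} [Sub R] (ξ : Fin (m + 1) → R) : Fin m → R :=
  fun j => ξ j.succ - ξ 0

lemma sum_mul_homogeniseExponent {R : Type*} [CommRing R] {d : ℕ} {α : Fin m →₀ ℕ}
    (hα : α.degree ≤ d) (ξ : Fin (m + 1) → R) :
    ∑ j, ξ j * (homogeniseExponent d α j : R) = d * ξ 0 + ∑ j, dehomogenise ξ j * α j := by
  rw [Fin.sum_univ_succ]
  simp only [homogeniseExponent, Finsupp.cons_zero, Finsupp.cons_succ]
  rw [Nat.cast_sub hα, Finsupp.degree_eq_sum, Nat.cast_sum, mul_sub, Finset.mul_sum]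
  simp only [dehomogenise, sub_mul, Finset.sum_sub_distrib]
  ring

lemma Trop_homogenise (v : K → ℝ) {g : MvPolynomial (Fin m) K} (hg : g ≠ 0) {d : ℕ}
    (hdeg : g.totalDegree ≤ d) (ξ : Fin (m + 1) → ℝ) :
    Trop v (homogenise d g) ξ = d * ξ 0 + Trop v g (dehomogenise ξ) := by
  have hgs : g.support.Nonempty := support_nonempty.2 hg
  have hhs : (homogenise d g).support.Nonempty := by
    rw [support_homogenise]
    exact hgs.image _
  calc Trop v (homogenise d g) ξ
      = (g.support.image (homogeniseExponent d)).inf' (hgs.image _)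
          fun β => v ((homogenise d g).coeff β) + ∑ j, ξ j * (β j : ℝ) := by
        rw [Trop, dif_pos hhs]
        exact Finset.inf'_congr hhs (support_homogenise d g) fun _ _ => rfl
    _ = g.support.inf' hgs fun α =>
          d * ξ 0 + (v (g.coeff α) + ∑ j, dehomogenise ξ j * (α j : ℝ)) := by
        rw [Finset.inf'_image]
        refine Finset.inf'_congr hgs rfl fun α hα => ?_
        have hα_deg : α.degree ≤ d := (le_totalDegree hα).trans hdeg
        rw [Function.comp_apply, coeff_homogenise, sum_mul_homogeniseExponent hα_deg]
        ring
    _ = d * ξ 0 + Trop v g (dehomogenise ξ) := by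
        rw [Trop, dif_pos hgs]
        exact (map_finset_inf' (OrderIso.addLeft _) hgs _).symm

lemma dehomogenise_cons {R : Type*} [AddCommGroup R] (t : R) (ξ : Fin m → R) :
    dehomogenise (Fin.cons t fun j => ξ j + t : Fin (m + 1) → R) = ξ := by
  funext j
  simp [dehomogenise]

lemma tropMapHom_eq_tropMap_dehomogenise {n : ℕ} (v : K → ℝ) {f : Fin n → MvPolynomial (Fin m) K}
    {g : MvPolynomial (Fin m) K} (hg : g ≠ 0) (hf : ∀ i, f i ≠ 0) {d : ℕ}
    (hdegg : g.totalDegree ≤ d) (hdegf : ∀ i, (f i).totalDegree ≤ d) (ξ : Fin (m + 1) → ℝ) :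
    tropMapHom v f g d ξ = Fin.cons 0 (tropMap v f g (dehomogenise ξ)) +
      fun _ => d * ξ 0 + Trop v g (dehomogenise ξ) := by
  funext i
  refine Fin.cases ?_ (fun i => ?_) i
  · simp [tropMapHom, Trop_homogenise v hg hdegg]
  · simp only [tropMapHom, tropMap, Fin.cons_succ, Pi.add_apply,
      Trop_homogenise v (hf i) (hdegf i)]
    ring

end

/-- Homogenisation Lemma: the image of `Trop(φ̃)` equals
`{0} × im(Trop(φ)) + ℝ·(1,…,1)`. -/
theorem range_tropMapHom {K : Type*} [Field K] {m n : ℕ} (v : K → ℝ)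
    (f : Fin n → MvPolynomial (Fin m) K) (g : MvPolynomial (Fin m) K)
    (hg : g ≠ 0) (hf : ∀ i, f i ≠ 0) (d : ℕ) (hd : 0 < d)
    (hdegg : g.totalDegree ≤ d) (hdegf : ∀ i, (f i).totalDegree ≤ d) :
    Set.range (tropMapHom v f g d) =
      {η | ∃ ζ ∈ Set.range (tropMap v f g), ∃ c : ℝ,
        η = Fin.cons 0 ζ + fun _ => c} := by
  ext η
  constructor
  · rintro ⟨ξ, rfl⟩
    exact ⟨_, ⟨_, rfl⟩, _, tropMapHom_eq_tropMap_dehomogenise v hg hf hdegg hdegf ξ⟩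
  · rintro ⟨_, ⟨ξ, rfl⟩, c, rfl⟩
    have hd' : (d : ℝ) ≠ 0 := Nat.cast_ne_zero.2 hd.ne'
    -- the first coordinate `t` solves `d * t + Trop v g ξ = c`
    let t := (c - Trop v g ξ) / d
    refine ⟨Fin.cons t fun j => ξ j + t, ?_⟩
    rw [tropMapHom_eq_tropMap_dehomogenise v hg hf hdegg hdegf, dehomogenise_cons, Fin.cons_zero,
      mul_div_cancel₀ _ hd', sub_add_cancel]
end

section
/- Let X ⊆ T^2 be the line defined by y = x + 1 and let ψ : T^2 ⇢ X be the rational map (s,u) ↦ ((1+s)/(u−s), (1+u)/(u−s)). Then the image of Trop(ψ) : ℝ^2 → ℝ^2 equals Trop(X), which is the tripod {(λ,0) : λ ≥ 0} ∪ {(0,λ) : λ ≥ 0} ∪ {(λ,λ) : λ ≤ 0}. Hence X is tropically unirational. -/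
open MvPolynomial

/-- The tripod: the tropical variety of the line `y = x + 1` in `T²`. -/
def tripod : Set (ℝ × ℝ) :=
  {p | (∃ l : ℝ, 0 ≤ l ∧ p = (l, 0)) ∨ (∃ l : ℝ, 0 ≤ l ∧ p = (0, l)) ∨
       (∃ l : ℝ, l ≤ 0 ∧ p = (l, l))}

/-!
The two numerators and the denominator of `ψ` are binomials whose coefficients are `±1`, which
have valuation `0`; so `Trop(1 + s) = min(0, σ)`, `Trop(u - s) = min(σ, υ)`, and `Trop ψ` is an
explicit piecewise-linear map. On `σ ≤ υ` it sends `σ ≥ 0` to `(-σ, -σ)` and `σ ≤ 0` to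
`(0, min(0, υ) - σ)`, and symmetrically on `υ ≤ σ`, so it lands in the tripod; conversely the
legs are hit by `(0, -λ) ↦ (λ, 0)`, `(-λ, 0) ↦ (0, λ)` and `(-λ, -λ) ↦ (λ, λ)`.
-/

theorem val_one_eq_zero {M : Type*} [MulZeroOneClass M] [Nontrivial M] (v : M → ℝ)
    (hmul : ∀ a b : M, a ≠ 0 → b ≠ 0 → v (a * b) = v a + v b) : v 1 = 0 := by
  have := hmul 1 1 one_ne_zero one_ne_zero
  rw [one_mul] at this
  linarith

theorem val_neg_one_eq_zero {R : Type*} [Ring R] [Nontrivial R] (v : R → ℝ)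
    (hmul : ∀ a b : R, a ≠ 0 → b ≠ 0 → v (a * b) = v a + v b) : v (-1) = 0 := by
  have := hmul (-1) (-1) (neg_ne_zero.mpr one_ne_zero) (neg_ne_zero.mpr one_ne_zero)
  rw [neg_mul_neg, one_mul, val_one_eq_zero v hmul] at this
  linarith

section Trop

variable {K : Type*} [CommRing K] {m : ℕ} (v : K → ℝ)

theorem support_monomial_add_monomial {a b : Fin m →₀ ℕ} (hab : a ≠ b) {c d : K}
    (hc : c ≠ 0) (hd : d ≠ 0) :
    (monomial a c + monomial b d).support = {a, b} := by
  ext α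
  obtain rfl | hαa := eq_or_ne α a
  · simp [coeff_monomial, hab.symm, hc]
  · obtain rfl | hαb := eq_or_ne α b
    · simp [coeff_monomial, hab, hd]
    · simp [coeff_monomial, hαa, hαb, hαa.symm, hαb.symm]

theorem trop_monomial_add_monomial {a b : Fin m →₀ ℕ} (hab : a ≠ b) {c d : K}
    (hc : c ≠ 0) (hd : d ≠ 0) (ξ : Fin m → ℝ) :
    Trop v (monomial a c + monomial b d) ξ =
      min (v c + ∑ j, ξ j * (a j : ℝ)) (v d + ∑ j, ξ j * (b j : ℝ)) := by
  have hsupp := support_monomial_add_monomial hab hc hd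
  rw [Trop, dif_pos (hsupp ▸ Finset.insert_nonempty a {b}),
    Finset.inf'_congr _ hsupp fun _ _ ↦ rfl,
    Finset.inf'_insert (Finset.singleton_nonempty b), Finset.inf'_singleton]
  simp [coeff_monomial, hab, hab.symm]

theorem trop_one_add_X [Nontrivial K] (hv1 : v 1 = 0) (i : Fin m) (ξ : Fin m → ℝ) :
    Trop v (1 + X i : MvPolynomial (Fin m) K) ξ = min 0 (ξ i) := by
  have hne : (0 : Fin m →₀ ℕ) ≠ Finsupp.single i 1 :=
    (Finsupp.single_ne_zero.mpr one_ne_zero).symm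
  rw [← C_1, C_apply, X, trop_monomial_add_monomial v hne one_ne_zero one_ne_zero]
  simp [hv1, Finsupp.single_apply]

theorem trop_X_sub_X [Nontrivial K] (hv1 : v 1 = 0) (hvn1 : v (-1) = 0) {i j : Fin m}
    (hij : i ≠ j) (ξ : Fin m → ℝ) :
    Trop v (X i - X j : MvPolynomial (Fin m) K) ξ = min (ξ i) (ξ j) := by
  have hne : Finsupp.single i 1 ≠ Finsupp.single j 1 :=
    fun h ↦ hij (Finsupp.single_left_injective one_ne_zero h)
  rw [sub_eq_add_neg, X, X, ← map_neg,
    trop_monomial_add_monomial v hne one_ne_zero (neg_ne_zero.mpr one_ne_zero)]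
  simp [hv1, hvn1, Finsupp.single_apply]

end Trop

def tropPsi (ξ : Fin 2 → ℝ) : ℝ × ℝ :=
  (min 0 (ξ 0) - min (ξ 0) (ξ 1), min 0 (ξ 1) - min (ξ 0) (ξ 1))

theorem tropPsi_mem_tripod (ξ : Fin 2 → ℝ) : tropPsi ξ ∈ tripod := by
  unfold tropPsi
  generalize ξ 0 = s, ξ 1 = u
  rcases le_total s u with hsu | hus
  · rw [min_eq_left hsu]
    rcases le_total 0 s with hs | hs
    · refine Or.inr (Or.inr ⟨-s, by linarith, ?_⟩)
      rw [min_eq_left hs, min_eq_left (hs.trans hsu), zero_sub]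
    · refine Or.inr (Or.inl ⟨min 0 u - s, sub_nonneg.mpr (le_min hs hsu), ?_⟩)
      rw [min_eq_right hs, sub_self]
  · rw [min_eq_right hus]
    rcases le_total 0 u with hu | hu
    · refine Or.inr (Or.inr ⟨-u, by linarith, ?_⟩)
      rw [min_eq_left hu, min_eq_left (hu.trans hus), zero_sub]
    · refine Or.inl ⟨min 0 s - u, sub_nonneg.mpr (le_min hu hus), ?_⟩
      rw [min_eq_right hu, sub_self]

theorem range_tropPsi : Set.range tropPsi = tripod := by
  refine subset_antisymm (Set.range_subset_iff.mpr tropPsi_mem_tripod) ?_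
  rintro p (⟨l, hl, rfl⟩ | ⟨l, hl, rfl⟩ | ⟨l, hl, rfl⟩)
  · exact ⟨![0, -l], by simp [tropPsi, hl]⟩
  · exact ⟨![-l, 0], by simp [tropPsi, hl]⟩
  · exact ⟨![-l, -l], by simp [tropPsi, hl]⟩

theorem range_trop_line_reparam_general {K : Type*} [Field K] (v : K → ℝ)
    (hmul : ∀ a b : K, a ≠ 0 → b ≠ 0 → v (a * b) = v a + v b) :
    Set.range (fun ξ : Fin 2 → ℝ =>
        ((Trop v (1 + X 0 : MvPolynomial (Fin 2) K) ξ -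
            Trop v (X 1 - X 0 : MvPolynomial (Fin 2) K) ξ,
          Trop v (1 + X 1 : MvPolynomial (Fin 2) K) ξ -
            Trop v (X 1 - X 0 : MvPolynomial (Fin 2) K) ξ) : ℝ × ℝ)) =
      tripod := by
  have hv1 := val_one_eq_zero v hmul
  have hvn1 := val_neg_one_eq_zero v hmul
  convert range_tropPsi using 2
  funext ξ
  rw [trop_one_add_X v hv1, trop_one_add_X v hv1, trop_X_sub_X v hv1 hvn1 (by decide),
    min_comm (ξ 1), tropPsi]

/-- For the rational map `ψ : T² ⇢ X`, `(s,u) ↦ ((1+s)/(u−s), (1+u)/(u−s))` onto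
the line `X = {y = x + 1}`, the image of `Trop(ψ)` equals `Trop(X)`, the tripod.
Hence `X` is tropically unirational. Here `s, u` are the variables `X 0, X 1`. -/
theorem range_trop_line_reparam {K : Type*} [Field K] (v : K → ℝ)
    (hmul : ∀ a b : K, a ≠ 0 → b ≠ 0 → v (a * b) = v a + v b)
    (hadd : ∀ a b : K, a ≠ 0 → b ≠ 0 → a + b ≠ 0 → min (v a) (v b) ≤ v (a + b)) :
    Set.range (fun ξ : Fin 2 → ℝ =>
        ((Trop v (1 + X 0 : MvPolynomial (Fin 2) K) ξ -
            Trop v (X 1 - X 0 : MvPolynomial (Fin 2) K) ξ,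
          Trop v (1 + X 1 : MvPolynomial (Fin 2) K) ξ -
            Trop v (X 1 - X 0 : MvPolynomial (Fin 2) K) ξ) : ℝ × ℝ)) =
      tripod :=
  range_trop_line_reparam_general v hmul
end

section
/- Let ξ ∈ ℝ be such that ξ is not in the ℚ-vector space spanned by v(K^*). Then the Laurent polynomial ring K[t, t^{-1}] is dense in the completion K(t)_ξ of the rational function field K(t) with respect to the valuation v_ξ defined by v_ξ(Σ a_i t^i) = min_i (v(a_i) + iξ). -/
/-- The Gauss valuation of a polynomial `q = Σ_i a_i t^i` at `t`-value `ξ`: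
`v_ξ(q) = min_i (v(a_i) + i·ξ)` (set to `0` for the zero polynomial). -/
noncomputable def vPoly {K : Type*} [CommRing K] (v : K → ℝ) (ξ : ℝ)
    (q : Polynomial K) : ℝ :=
  if h : q.support.Nonempty then
    q.support.inf' h (fun i => v (q.coeff i) + (i : ℝ) * ξ)
  else 0

/-- The valuation `v_ξ` on the rational function field `K(t)`, extending `v` with
`v_ξ(t) = ξ`, computed via numerator and denominator. -/
noncomputable def vRat {K : Type*} [Field K] (v : K → ℝ) (ξ : ℝ)
    (h : RatFunc K) : ℝ :=
  vPoly v ξ h.num - vPoly v ξ h.denom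

/-! The Gauss valuation `v_ξ` on `K[t]` is `-log` of Mathlib's Gauss norm for the nonarchimedean
absolute value `exp (-v)` at radius `exp (-ξ)`, hence multiplicative and compatible with `vRat`.
Since `ξ` is independent of `v(K^*)`, the minimum defining `v_ξ(q)` is attained at a single
monomial `m = c t^j`, so `q = m + e` with `v_ξ(e) > v_ξ(m)`. Truncating the geometric series
`1/q = Σ (-e)^n / m^(n+1)` after `N` terms gives a Laurent polynomial `p / t^(jN)` with
`f/q - p/t^(jN) = f (-e)^N / (m^N q)`, whose valuation grows linearly in `N`. -/

open Polynomial

section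

variable {K : Type*} [Field K] {v : K → ℝ} (ξ : ℝ)

theorem vPoly_le_of_mem_support {q : K[X]} {i : ℕ} (hi : i ∈ q.support) :
    vPoly v ξ q ≤ v (q.coeff i) + i * ξ := by
  rw [vPoly, dif_pos ⟨i, hi⟩]
  exact Finset.inf'_le _ hi

theorem exists_vPoly_eq {q : K[X]} (hq : q ≠ 0) :
    ∃ j ∈ q.support, vPoly v ξ q = v (q.coeff j) + j * ξ := by
  have hs := nonempty_support_iff.mpr hq
  obtain ⟨j, hj, hmin⟩ := q.support.exists_mem_eq_inf' hs fun i => v (q.coeff i) + i * ξ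
  exact ⟨j, hj, by rw [vPoly, dif_pos hs, hmin]⟩

open Classical in
theorem isNonarchimedean_ite_exp_neg
    (hadd : ∀ a b : K, a ≠ 0 → b ≠ 0 → a + b ≠ 0 → min (v a) (v b) ≤ v (a + b)) :
    IsNonarchimedean fun a : K => if a = 0 then 0 else Real.exp (-v a) := by
  intro a b
  by_cases ha : a = 0
  · simp [ha]
  by_cases hb : b = 0
  · simp [hb]
  by_cases hab : a + b = 0
  · simp only [hab, if_true]; positivity
  have hanti : Antitone fun x : ℝ => Real.exp (-x) := fun x y hxy => by simpa using hxy
  simp only [ha, hb, hab, if_false, ← hanti.map_min, Real.exp_le_exp, neg_le_neg_iff]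
  exact hadd a b ha hb hab

open Classical in
noncomputable def expNegAbv (v : K → ℝ)
    (hmul : ∀ a b : K, a ≠ 0 → b ≠ 0 → v (a * b) = v a + v b)
    (hadd : ∀ a b : K, a ≠ 0 → b ≠ 0 → a + b ≠ 0 → min (v a) (v b) ≤ v (a + b)) :
    AbsoluteValue K ℝ where
  toFun a := if a = 0 then 0 else Real.exp (-v a)
  map_mul' a b := by
    by_cases ha : a = 0
    · simp [ha]
    by_cases hb : b = 0
    · simp [hb]
    simp [ha, hb, hmul a b ha hb, Real.exp_add, mul_comm]
  nonneg' a := by positivity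
  eq_zero' a := by
    by_cases ha : a = 0 <;> simp [ha, (Real.exp_pos _).ne']
  add_le' a b := (isNonarchimedean_ite_exp_neg hadd a b).trans
    (max_le_add_of_nonneg (by positivity) (by positivity))

section GaussNorm

variable (hmul : ∀ a b : K, a ≠ 0 → b ≠ 0 → v (a * b) = v a + v b)
  (hadd : ∀ a b : K, a ≠ 0 → b ≠ 0 → a + b ≠ 0 → min (v a) (v b) ≤ v (a + b))

theorem expNegAbv_apply_of_ne_zero {a : K} (ha : a ≠ 0) :
    expNegAbv v hmul hadd a = Real.exp (-v a) := by
  simp [expNegAbv, ha]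

theorem isAbsoluteValue_gaussNorm_expNegAbv :
    IsAbsoluteValue (gaussNorm (expNegAbv v hmul hadd) (Real.exp (-ξ))) :=
  gaussNorm_isAbsoluteValue (isNonarchimedean_ite_exp_neg hadd) (Real.exp_pos _)

theorem gaussNorm_expNegAbv {q : K[X]} (hq : q ≠ 0) :
    q.gaussNorm (expNegAbv v hmul hadd) (Real.exp (-ξ)) = Real.exp (-vPoly v ξ q) := by
  have hs := nonempty_support_iff.mpr hq
  have hterm : ∀ i ∈ q.support, expNegAbv v hmul hadd (q.coeff i) * Real.exp (-ξ) ^ i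
      = Real.exp (-(v (q.coeff i) + i * ξ)) := fun i hi => by
    rw [expNegAbv_apply_of_ne_zero hmul hadd (mem_support_iff.mp hi), ← Real.exp_nat_mul,
      ← Real.exp_add]
    ring_nf
  obtain ⟨j, hj, hvPoly⟩ := exists_vPoly_eq ξ hq
  rw [gaussNorm, dif_pos hs, hvPoly, ← hterm j hj]
  refine le_antisymm (Finset.sup'_le _ _ fun i hi => ?_)
    (Finset.le_sup'_of_le _ hj le_rfl)
  rw [hterm i hi, hterm j hj, Real.exp_le_exp, neg_le_neg_iff, ← hvPoly]
  exact vPoly_le_of_mem_support ξ hi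

end GaussNorm

section VPoly

theorem vPoly_mul (hmul : ∀ a b : K, a ≠ 0 → b ≠ 0 → v (a * b) = v a + v b)
    (hadd : ∀ a b : K, a ≠ 0 → b ≠ 0 → a + b ≠ 0 → min (v a) (v b) ≤ v (a + b))
    {a b : K[X]} (ha : a ≠ 0) (hb : b ≠ 0) :
    vPoly v ξ (a * b) = vPoly v ξ a + vPoly v ξ b := by
  have := isAbsoluteValue_gaussNorm_expNegAbv ξ hmul hadd
  have h := IsAbsoluteValue.abv_mul (gaussNorm (expNegAbv v hmul hadd) (Real.exp (-ξ))) a b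
  rw [gaussNorm_expNegAbv ξ hmul hadd (mul_ne_zero ha hb), gaussNorm_expNegAbv ξ hmul hadd ha,
    gaussNorm_expNegAbv ξ hmul hadd hb, ← Real.exp_add] at h
  linarith [Real.exp_injective h]

theorem vPoly_pow (hmul : ∀ a b : K, a ≠ 0 → b ≠ 0 → v (a * b) = v a + v b)
    (hadd : ∀ a b : K, a ≠ 0 → b ≠ 0 → a + b ≠ 0 → min (v a) (v b) ≤ v (a + b))
    {a : K[X]} (ha : a ≠ 0) (n : ℕ) :
    vPoly v ξ (a ^ n) = n * vPoly v ξ a := by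
  have := isAbsoluteValue_gaussNorm_expNegAbv ξ hmul hadd
  have h := IsAbsoluteValue.abv_pow (gaussNorm (expNegAbv v hmul hadd) (Real.exp (-ξ))) a n
  rw [gaussNorm_expNegAbv ξ hmul hadd (pow_ne_zero n ha), gaussNorm_expNegAbv ξ hmul hadd ha,
    ← Real.exp_nat_mul] at h
  linarith [Real.exp_injective h]

theorem vPoly_neg (hmul : ∀ a b : K, a ≠ 0 → b ≠ 0 → v (a * b) = v a + v b)
    (hadd : ∀ a b : K, a ≠ 0 → b ≠ 0 → a + b ≠ 0 → min (v a) (v b) ≤ v (a + b))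
    {a : K[X]} (ha : a ≠ 0) :
    vPoly v ξ (-a) = vPoly v ξ a := by
  have := isAbsoluteValue_gaussNorm_expNegAbv ξ hmul hadd
  have h := IsAbsoluteValue.abv_neg (gaussNorm (expNegAbv v hmul hadd) (Real.exp (-ξ))) a
  rw [gaussNorm_expNegAbv ξ hmul hadd (neg_ne_zero.mpr ha),
    gaussNorm_expNegAbv ξ hmul hadd ha] at h
  linarith [Real.exp_injective h]

theorem vPoly_monomial {c : K} (hc : c ≠ 0) (j : ℕ) :
    vPoly v ξ (monomial j c) = v c + j * ξ := by
  simp [vPoly, support_monomial j hc]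

theorem vRat_div (hmul : ∀ a b : K, a ≠ 0 → b ≠ 0 → v (a * b) = v a + v b)
    (hadd : ∀ a b : K, a ≠ 0 → b ≠ 0 → a + b ≠ 0 → min (v a) (v b) ≤ v (a + b))
    {a b : K[X]} (ha : a ≠ 0) (hb : b ≠ 0) :
    vRat v ξ (algebraMap K[X] (RatFunc K) a / algebraMap K[X] (RatFunc K) b) =
      vPoly v ξ a - vPoly v ξ b := by
  set g := algebraMap K[X] (RatFunc K) a / algebraMap K[X] (RatFunc K) b
  have hg : g ≠ 0 := div_ne_zero (RatFunc.algebraMap_ne_zero ha) (RatFunc.algebraMap_ne_zero hb)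
  have hcross : g.num * b = a * g.denom := by
    apply RatFunc.algebraMap_injective K
    rw [map_mul, map_mul, ← div_eq_div_iff (RatFunc.algebraMap_ne_zero g.denom_ne_zero)
      (RatFunc.algebraMap_ne_zero hb), RatFunc.num_div_denom]
  have := congrArg (vPoly v ξ) hcross
  rw [vPoly_mul ξ hmul hadd (RatFunc.num_ne_zero hg) hb,
    vPoly_mul ξ hmul hadd ha g.denom_ne_zero] at this
  rw [vRat]
  linarith

end VPoly

theorem add_nat_mul_ne_add_nat_mul
    (hξ : ξ ∉ Submodule.span ℚ (Set.range fun a : Kˣ => v (a : K)))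
    {x y : K} (hx : x ≠ 0) (hy : y ≠ 0) {i j : ℕ} (hij : i ≠ j) :
    v x + i * ξ ≠ v y + j * ξ := by
  intro heq
  apply hξ
  have hji : (j : ℝ) - i ≠ 0 := sub_ne_zero.mpr (Nat.cast_injective.ne hij.symm)
  have hξ_eq : ξ = (((j : ℚ) - i)⁻¹ : ℚ) • (v x - v y) := by
    rw [Rat.smul_def]
    push_cast
    field_simp
    linarith
  rw [hξ_eq]
  exact Submodule.smul_mem _ _ <| Submodule.sub_mem _
    (Submodule.subset_span ⟨Units.mk0 x hx, rfl⟩)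
    (Submodule.subset_span ⟨Units.mk0 y hy, rfl⟩)

theorem exists_vPoly_lt_vPoly_erase
    (hξ : ξ ∉ Submodule.span ℚ (Set.range fun a : Kˣ => v (a : K)))
    {q : K[X]} (hq : q ≠ 0) :
    ∃ j, q.coeff j ≠ 0 ∧ vPoly v ξ q = v (q.coeff j) + j * ξ ∧
      (q.erase j ≠ 0 → vPoly v ξ q < vPoly v ξ (q.erase j)) := by
  obtain ⟨j, hj, hvPoly⟩ := exists_vPoly_eq ξ hq
  refine ⟨j, mem_support_iff.mp hj, hvPoly, fun he => ?_⟩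
  rw [hvPoly, vPoly, dif_pos (nonempty_support_iff.mpr he), Finset.lt_inf'_iff]
  intro i hi
  rw [support_erase, Finset.mem_erase] at hi
  rw [coeff_erase, if_neg hi.1]
  refine (hvPoly ▸ vPoly_le_of_mem_support ξ hi.2).lt_of_ne ?_
  exact add_nat_mul_ne_add_nat_mul ξ hξ (mem_support_iff.mp hj) (mem_support_iff.mp hi.2)
    hi.1.symm

theorem exists_div_sub_div_X_pow_eq (f e : K[X]) {c : K} (hc : c ≠ 0) (j N : ℕ)
    (hq : monomial j c + e ≠ 0) :
    ∃ p : K[X],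
      algebraMap K[X] (RatFunc K) f / algebraMap K[X] (RatFunc K) (monomial j c + e) -
          algebraMap K[X] (RatFunc K) p / RatFunc.X ^ (j * N) =
      algebraMap K[X] (RatFunc K) (f * (-e) ^ N) /
        algebraMap K[X] (RatFunc K) (monomial j c ^ N * (monomial j c + e)) := by
  set m := monomial j c
  -- `m ^ N = c ^ N * X ^ (j * N)`: dividing by `X ^ (j * N)` is dividing by `m ^ N` up to `c ^ N`
  refine ⟨C (c⁻¹ ^ N) * f * ∑ i ∈ Finset.range N, m ^ i * (-e) ^ (N - 1 - i), ?_⟩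
  have hgeom := geom_sum₂_mul m (-e) N
  have hm : m ^ N = C (c ^ N) * X ^ (j * N) := by
    rw [monomial_pow, C_mul_X_pow_eq_monomial, mul_comm]
  have hcc : C (c⁻¹ ^ N) * C (c ^ N) = (1 : K[X]) := by
    rw [← C_mul, ← mul_pow, inv_mul_cancel₀ hc, one_pow, C_1]
  have hmN : m ^ N ≠ 0 := pow_ne_zero _ (by simpa [m] using hc)
  have hXN := RatFunc.algebraMap_ne_zero (pow_ne_zero (j * N) (X_ne_zero : (X : K[X]) ≠ 0))
  have hq' := RatFunc.algebraMap_ne_zero hq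
  rw [← RatFunc.algebraMap_X, ← map_pow, div_sub_div _ _ hq' hXN,
    div_eq_div_iff (mul_ne_zero hq' hXN) (RatFunc.algebraMap_ne_zero (mul_ne_zero hmN hq))]
  simp only [← map_mul, ← map_sub]
  congr 1
  linear_combination (-(m + e) * C (c⁻¹ ^ N) * f * m ^ N) * hgeom
    - (m + e) * C (c⁻¹ ^ N) * f * (m ^ N - (-e) ^ N) * hm
    - (m + e) * f * X ^ (j * N) * (m ^ N - (-e) ^ N) * hcc

theorem vRat_geom_sum_remainder (hmul : ∀ a b : K, a ≠ 0 → b ≠ 0 → v (a * b) = v a + v b)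
    (hadd : ∀ a b : K, a ≠ 0 → b ≠ 0 → a + b ≠ 0 → min (v a) (v b) ≤ v (a + b))
    {f e : K[X]} {c : K} (hf : f ≠ 0) (he : e ≠ 0) (hc : c ≠ 0) {j : ℕ}
    (hq : monomial j c + e ≠ 0) (N : ℕ) :
    vRat v ξ (algebraMap K[X] (RatFunc K) (f * (-e) ^ N) /
        algebraMap K[X] (RatFunc K) (monomial j c ^ N * (monomial j c + e))) =
      vPoly v ξ f - vPoly v ξ (monomial j c + e) + N * (vPoly v ξ e - (v c + j * ξ)) := by
  have hm : monomial j c ≠ 0 := by simpa using hc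
  have he' : (-e) ^ N ≠ 0 := pow_ne_zero _ (neg_ne_zero.mpr he)
  rw [vRat_div ξ hmul hadd (mul_ne_zero hf he') (mul_ne_zero (pow_ne_zero _ hm) hq),
    vPoly_mul ξ hmul hadd hf he', vPoly_mul ξ hmul hadd (pow_ne_zero _ hm) hq,
    vPoly_pow ξ hmul hadd (neg_ne_zero.mpr he), vPoly_pow ξ hmul hadd hm,
    vPoly_neg ξ hmul hadd he, vPoly_monomial ξ hc]
  ring

end

/-- If `ξ` is not in the `ℚ`-span of `v(K^*)`, then the Laurent polynomials
`K[t, t⁻¹]` are dense in `K(t)` for the valuation `v_ξ`: every `h ∈ K(t)` is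
approximated to arbitrary order `M` by Laurent polynomials `p · t^{-k}`. -/
theorem laurent_dense_in_completion {K : Type*} [Field K] (v : K → ℝ)
    (hmul : ∀ a b : K, a ≠ 0 → b ≠ 0 → v (a * b) = v a + v b)
    (hadd : ∀ a b : K, a ≠ 0 → b ≠ 0 → a + b ≠ 0 → min (v a) (v b) ≤ v (a + b))
    (ξ : ℝ) (hξ : ξ ∉ Submodule.span ℚ (Set.range fun a : Kˣ => v (a : K)))
    (h : RatFunc K) (M : ℝ) :
    ∃ (p : Polynomial K) (k : ℕ),
      h - algebraMap (Polynomial K) (RatFunc K) p / RatFunc.X ^ k = 0 ∨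
      M < vRat v ξ (h - algebraMap (Polynomial K) (RatFunc K) p / RatFunc.X ^ k) := by
  obtain ⟨j, hc, hvq, hlt⟩ := exists_vPoly_lt_vPoly_erase ξ hξ h.denom_ne_zero
  set c := h.denom.coeff j
  set e := h.denom.erase j
  have hq : monomial j c + e = h.denom := monomial_add_erase _ _
  have hq0 : monomial j c + e ≠ 0 := hq ▸ h.denom_ne_zero
  have hh : h = algebraMap K[X] (RatFunc K) h.num /
      algebraMap K[X] (RatFunc K) (monomial j c + e) := by
    rw [hq, RatFunc.num_div_denom]
  rcases eq_or_ne (h.num * e) 0 with hfe | hfe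
  · obtain ⟨p, hp⟩ := exists_div_sub_div_X_pow_eq h.num e hc j 1 hq0
    exact ⟨p, j * 1, Or.inl (by rw [hh, hp, pow_one, mul_neg, hfe]; simp)⟩
  obtain ⟨hf, he⟩ := mul_ne_zero_iff.mp hfe
  set δ := vPoly v ξ e - (v c + j * ξ)
  have hδ : 0 < δ := by linarith [hlt he]
  obtain ⟨N, hN⟩ := exists_nat_gt ((M - (vPoly v ξ h.num - vPoly v ξ h.denom)) / δ)
  rw [div_lt_iff₀ hδ] at hN
  obtain ⟨p, hp⟩ := exists_div_sub_div_X_pow_eq h.num e hc j N hq0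
  refine ⟨p, j * N, Or.inr ?_⟩
  rw [hh, hp, vRat_geom_sum_remainder ξ hmul hadd hf he hc hq0, hq]
  linarith
end

section
/- Let π : T^n → T^d be a torus homomorphism whose restriction to a subvariety X ⊆ T^n is birational, with rational inverse φ : T^d ⇢ X. Then Trop(π) ∘ Trop(φ) is the identity map on ℝ^d. -/
/-!
Write `e = E i j = e⁺ - e⁻`. Clearing denominators in `∏ⱼ (fⱼ / g) ^ e = xᵢ`, which holds wherever
`g`, the `fⱼ` and the `xₖ` do not vanish and hence identically (`K` is infinite), gives the
polynomial identity `∏ⱼ fⱼ ^ e⁺ * g ^ e⁻ = xᵢ * ∏ⱼ fⱼ ^ e⁻ * g ^ e⁺`. For each `η`, `Trop(·)(η)`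
is multiplicative on nonzero polynomials (Gauss's lemma for the monomial valuation of weight
`η`), so tropicalising both sides gives `∑ⱼ E i j * (Trop fⱼ η - Trop g η) = ηᵢ`, with no need
to realise `η` as the valuation of a point.
-/

open MvPolynomial

theorem exists_addValuation_apply_eq {K : Type*} [Field K] {v : K → ℝ}
    (hmul : ∀ a b : K, a ≠ 0 → b ≠ 0 → v (a * b) = v a + v b)
    (hadd : ∀ a b : K, a ≠ 0 → b ≠ 0 → a + b ≠ 0 → min (v a) (v b) ≤ v (a + b)) :
    ∃ w : AddValuation K (WithTop ℝ), ∀ a, a ≠ 0 → w a = v a := by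
  classical
  have hv1 : v 1 = 0 := by
    have := hmul 1 1 one_ne_zero one_ne_zero
    rw [mul_one] at this
    linarith
  refine ⟨AddValuation.of (fun a => if a = 0 then ⊤ else (v a : WithTop ℝ)) (by simp)
    (by simp [hv1]) (fun a b => ?_) (fun a b => ?_), fun a ha => by simp [ha]⟩
  · by_cases ha : a = 0
    · simp [ha]
    by_cases hb : b = 0
    · simp [hb]
    by_cases hab : a + b = 0
    · simp [hab]
    simp only [if_neg ha, if_neg hb, if_neg hab]
    exact_mod_cast hadd a b ha hb hab
  · by_cases ha : a = 0
    · simp [ha]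
    by_cases hb : b = 0
    · simp [hb]
    simp only [if_neg ha, if_neg hb, if_neg (mul_ne_zero ha hb)]
    exact_mod_cast hmul a b ha hb

theorem WithTop.eq_coe_and_eq_coe_of_add_le_coe_add {α : Type*} [AddCommMonoid α]
    [PartialOrder α] [IsOrderedCancelAddMonoid α] {a b : WithTop α} {a₀ b₀ : α}
    (ha : (a₀ : WithTop α) ≤ a) (hb : (b₀ : WithTop α) ≤ b)
    (hab : a + b ≤ ((a₀ + b₀ : α) : WithTop α)) :
    a = a₀ ∧ b = b₀ := by
  lift a to α using fun h => by simp [h] at hab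
  lift b to α using fun h => by simp [h] at hab
  norm_cast at ha hb hab ⊢
  exact ((add_eq_add_iff_eq_and_eq ha hb).mp (le_antisymm (add_le_add ha hb) hab)).imp
    Eq.symm Eq.symm

theorem MvPolynomial.eq_of_eval_eq_of_eval_ne_zero {σ R : Type*} [CommRing R] [IsDomain R]
    [Infinite R] {p q r : MvPolynomial σ R} (hr : r ≠ 0)
    (h : ∀ x, eval x r ≠ 0 → eval x p = eval x q) : p = q := by
  refine mul_right_cancel₀ hr (MvPolynomial.funext fun x => ?_)
  by_cases hx : eval x r = 0
  · simp [hx]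
  · simp [h x hx]

theorem pow_toNat_mul_pow_toNat_neg_eq {K : Type*} [Field K] {a b : K} (ha : a ≠ 0)
    (hb : b ≠ 0) (e : ℤ) :
    a ^ e.toNat * b ^ (-e).toNat = (a / b) ^ e * (a ^ (-e).toNat * b ^ e.toNat) := by
  have he : (a / b) ^ e = (a / b) ^ e.toNat / (a / b) ^ (-e).toNat := by
    rw [← zpow_natCast, ← zpow_natCast, ← zpow_sub₀ (div_ne_zero ha hb),
      Int.toNat_sub_toNat_neg]
  rw [he, div_pow, div_pow]
  field_simp

section Trop

open Finset.HasAntidiagonal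
open Finsupp (weight weight_eq_sum weight_single)

variable {K : Type*} [Field K] {m : ℕ} {v : K → ℝ} {w : AddValuation K (WithTop ℝ)}
  {f h : MvPolynomial (Fin m) K} (ξ : Fin m → ℝ)

theorem trop_eq_inf' (hf : f ≠ 0) :
    Trop v f ξ = f.support.inf' (support_nonempty.mpr hf)
      (fun α => v (f.coeff α) + weight ξ α) := by
  simp only [Trop, dif_pos (support_nonempty.mpr hf), weight_eq_sum, nsmul_eq_mul, mul_comm]

theorem le_trop_iff (hw : ∀ a, a ≠ 0 → w a = v a) (hf : f ≠ 0) {c : ℝ} :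
    c ≤ Trop v f ξ ↔ ∀ α, ((c - weight ξ α : ℝ) : WithTop ℝ) ≤ w (f.coeff α) := by
  rw [trop_eq_inf' ξ hf, Finset.le_inf'_iff]
  refine forall_congr' fun α => ?_
  by_cases hα : f.coeff α = 0
  · simp [hα]
  rw [hw _ hα, WithTop.coe_le_coe, sub_le_iff_le_add, mem_support_iff]
  simp [hα]

theorem coe_trop_sub_weight_le (hw : ∀ a, a ≠ 0 → w a = v a) (hf : f ≠ 0)
    (α : Fin m →₀ ℕ) :
    ((Trop v f ξ - weight ξ α : ℝ) : WithTop ℝ) ≤ w (f.coeff α) :=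
  (le_trop_iff ξ hw hf).mp le_rfl α

theorem trop_le_of_apply_coeff_eq (hw : ∀ a, a ≠ 0 → w a = v a) (hf : f ≠ 0) {c : ℝ}
    {α : Fin m →₀ ℕ} (hα : w (f.coeff α) = ((c - weight ξ α : ℝ) : WithTop ℝ)) :
    Trop v f ξ ≤ c := by
  have hcoeff : f.coeff α ≠ 0 := by
    rintro h0
    rw [h0, AddValuation.map_zero] at hα
    exact WithTop.top_ne_coe hα
  rw [hw _ hcoeff, WithTop.coe_eq_coe] at hα
  rw [trop_eq_inf' ξ hf]
  refine (Finset.inf'_le _ (mem_support_iff.mpr hcoeff)).trans ?_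
  simp [hα]

theorem exists_lex_max_apply_coeff_eq_trop (hw : ∀ a, a ≠ 0 → w a = v a) (hf : f ≠ 0) :
    ∃ α', w (f.coeff α') = ((Trop v f ξ - weight ξ α' : ℝ) : WithTop ℝ) ∧
      ∀ α, w (f.coeff α) = ((Trop v f ξ - weight ξ α : ℝ) : WithTop ℝ) →
        toLex α ≤ toLex α' := by
  set S := f.support.filter
    fun α => w (f.coeff α) = ((Trop v f ξ - weight ξ α : ℝ) : WithTop ℝ)
  have hS : ∀ α,
      α ∈ S ↔ w (f.coeff α) = ((Trop v f ξ - weight ξ α : ℝ) : WithTop ℝ) := by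
    intro α
    refine ⟨fun h => (Finset.mem_filter.mp h).2, fun h => Finset.mem_filter.mpr ⟨?_, h⟩⟩
    rw [mem_support_iff]
    rintro h0
    rw [h0, AddValuation.map_zero] at h
    exact WithTop.top_ne_coe h
  obtain ⟨α₀, hα₀, hmin⟩ := Finset.exists_mem_eq_inf' (support_nonempty.mpr hf)
    fun α => v (f.coeff α) + weight ξ α
  have hS_nonempty : S.Nonempty := by
    refine ⟨α₀, (hS α₀).mpr ?_⟩
    rw [trop_eq_inf' ξ hf, hmin, hw _ (mem_support_iff.mp hα₀)]
    simp
  obtain ⟨α', hα', hmax⟩ := S.exists_max_image toLex hS_nonempty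
  exact ⟨α', (hS α').mp hα', fun α hα => hmax α ((hS α).mpr hα)⟩

/-- Gauss's lemma: the lexicographically largest minimising exponents of `f` and `h` add up to a
minimising exponent of `f * h`, since no other pair of minimising exponents has the same sum. -/
theorem trop_mul_s13 (hw : ∀ a, a ≠ 0 → w a = v a) (hf : f ≠ 0) (hh : h ≠ 0) :
    Trop v (f * h) ξ = Trop v f ξ + Trop v h ξ := by
  set Tf := Trop v f ξ
  set Th := Trop v h ξ
  have hweight : ∀ {α β γ : Fin m →₀ ℕ}, α + β = γ → Tf + Th - weight ξ γ =
      (Tf - weight ξ α) + (Th - weight ξ β) := by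
    rintro α β γ rfl
    rw [map_add]
    ring
  refine le_antisymm ?_ ((le_trop_iff ξ hw (mul_ne_zero hf hh)).mpr fun γ => ?_)
  · obtain ⟨α', hα', hα'max⟩ := exists_lex_max_apply_coeff_eq_trop ξ hw hf
    obtain ⟨β', hβ', hβ'max⟩ := exists_lex_max_apply_coeff_eq_trop ξ hw hh
    refine trop_le_of_apply_coeff_eq ξ hw (mul_ne_zero hf hh) (α := α' + β') ?_
    have hterm : w (f.coeff α' * h.coeff β') =
        ((Tf + Th - weight ξ (α' + β') : ℝ) : WithTop ℝ) := by
      rw [AddValuation.map_mul, hα', hβ', hweight rfl, WithTop.coe_add]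
    have hrest : ∀ p ∈ (antidiagonal (α' + β')).erase (α', β'),
        ((Tf + Th - weight ξ (α' + β') : ℝ) : WithTop ℝ) <
          w (f.coeff p.1 * h.coeff p.2) := by
      rintro ⟨α, β⟩ hp
      obtain ⟨hne, hsum⟩ := Finset.mem_erase.mp hp
      rw [mem_antidiagonal] at hsum
      rw [AddValuation.map_mul, hweight hsum]
      by_contra! hle
      obtain ⟨hα, hβ⟩ := WithTop.eq_coe_and_eq_coe_of_add_le_coe_add
        (coe_trop_sub_weight_le ξ hw hf α) (coe_trop_sub_weight_le ξ hw hh β) hle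
      have hlex := (add_eq_add_iff_eq_and_eq (hα'max α hα) (hβ'max β hβ)).mp
        (by rw [← toLex_add, ← toLex_add, hsum])
      exact hne (Prod.ext hlex.1 hlex.2)
    rw [coeff_mul, ← Finset.add_sum_erase _ _ (a := (α', β')) (mem_antidiagonal.mpr rfl),
      AddValuation.map_add_eq_of_lt_left _
        (hterm ▸ AddValuation.map_lt_sum _ WithTop.coe_ne_top hrest)]
    exact hterm
  · rw [coeff_mul]
    refine AddValuation.map_le_sum _ fun p hp => ?_
    rw [AddValuation.map_mul, hweight (mem_antidiagonal.mp hp), WithTop.coe_add]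
    exact add_le_add (coe_trop_sub_weight_le ξ hw hf _) (coe_trop_sub_weight_le ξ hw hh _)

theorem trop_monomial {c : K} (hc : c ≠ 0) (α : Fin m →₀ ℕ) :
    Trop v (monomial α c) ξ = v c + weight ξ α := by
  classical
  simp [trop_eq_inf' ξ ((monomial_eq_zero).not.mpr hc), support_monomial, hc]

theorem trop_X (hw : ∀ a, a ≠ 0 → w a = v a) (i : Fin m) :
    Trop v (X i : MvPolynomial (Fin m) K) ξ = ξ i := by
  have hv1 : v 1 = 0 := by exact_mod_cast (hw 1 one_ne_zero).symm.trans w.map_one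
  rw [X, trop_monomial ξ one_ne_zero, hv1, weight_single, one_smul, zero_add]

theorem trop_one (hw : ∀ a, a ≠ 0 → w a = v a) :
    Trop v (1 : MvPolynomial (Fin m) K) ξ = 0 := by
  have := trop_mul_s13 ξ hw (one_ne_zero' (MvPolynomial (Fin m) K)) one_ne_zero
  rw [mul_one] at this
  linarith

theorem trop_pow (hw : ∀ a, a ≠ 0 → w a = v a) (hf : f ≠ 0) (k : ℕ) :
    Trop v (f ^ k) ξ = k * Trop v f ξ := by
  induction k with
  | zero => simp [trop_one ξ hw]
  | succ k ih =>
    rw [pow_succ, trop_mul_s13 ξ hw (pow_ne_zero k hf) hf, ih]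
    push_cast
    ring

theorem trop_prod {ι : Type*} (hw : ∀ a, a ≠ 0 → w a = v a) (s : Finset ι)
    {p : ι → MvPolynomial (Fin m) K} (hp : ∀ j ∈ s, p j ≠ 0) :
    Trop v (∏ j ∈ s, p j) ξ = ∑ j ∈ s, Trop v (p j) ξ := by
  classical
  induction s using Finset.induction_on with
  | empty => simp [trop_one ξ hw]
  | insert a s ha ih =>
    rw [Finset.prod_insert ha, Finset.sum_insert ha,
      trop_mul_s13 ξ hw (hp a (s.mem_insert_self a))
        (Finset.prod_ne_zero_iff.mpr fun j hj => hp j (Finset.mem_insert_of_mem hj)),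
      ih fun j hj => hp j (Finset.mem_insert_of_mem hj)]

theorem trop_pow_mul_pow_sub_trop_pow_mul_pow (hw : ∀ a, a ≠ 0 → w a = v a)
    {g : MvPolynomial (Fin m) K} (hf : f ≠ 0) (hg : g ≠ 0) (e : ℤ) :
    Trop v (f ^ e.toNat * g ^ (-e).toNat) ξ - Trop v (f ^ (-e).toNat * g ^ e.toNat) ξ =
      e * (Trop v f ξ - Trop v g ξ) := by
  simp only [trop_mul_s13 ξ hw (pow_ne_zero _ hf) (pow_ne_zero _ hg), trop_pow ξ hw hf,
    trop_pow ξ hw hg]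
  have he : (e : ℝ) = e.toNat - (-e).toNat := by
    exact_mod_cast (Int.toNat_sub_toNat_neg e).symm
  rw [he]
  ring

end Trop

theorem prod_pow_mul_pow_eq_X_mul_prod_pow_mul_pow {σ ι K : Type*} [Fintype σ] [Fintype ι]
    [Field K] [Infinite K] {f : ι → MvPolynomial σ K} {g : MvPolynomial σ K} (hg : g ≠ 0)
    (hf : ∀ j, f j ≠ 0) (e : ι → ℤ) (i : σ)
    (hinv : ∀ y : σ → K, (∀ k, y k ≠ 0) → eval y g ≠ 0 → (∀ j, eval y (f j) ≠ 0) →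
      ∏ j, (eval y (f j) / eval y g) ^ e j = y i) :
    ∏ j, f j ^ (e j).toNat * g ^ (-e j).toNat =
      X i * ∏ j, f j ^ (-e j).toNat * g ^ (e j).toNat := by
  have hr : (∏ k, X k) * (g * ∏ j, f j) ≠ 0 :=
    mul_ne_zero (Finset.prod_ne_zero_iff.mpr fun k _ => X_ne_zero k)
      (mul_ne_zero hg (Finset.prod_ne_zero_iff.mpr fun j _ => hf j))
  refine MvPolynomial.eq_of_eval_eq_of_eval_ne_zero hr fun y hy => ?_
  simp only [map_mul, map_prod, eval_X, mul_ne_zero_iff, Finset.prod_ne_zero_iff,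
    Finset.mem_univ, forall_const] at hy
  obtain ⟨hyk, hyg, hyf⟩ := hy
  simp only [map_mul, map_prod, map_pow, eval_X]
  rw [← hinv y hyk hyg hyf, ← Finset.prod_mul_distrib]
  exact Finset.prod_congr rfl fun j _ => pow_toNat_mul_pow_toNat_neg_eq (hyf j) hyg (e j)

theorem trop_pi_comp_trop_phi_eq_id_general {K : Type*} [Field K] [IsAlgClosed K]
    {n d : ℕ} (v : K → ℝ)
    (hmul : ∀ a b : K, a ≠ 0 → b ≠ 0 → v (a * b) = v a + v b)
    (hadd : ∀ a b : K, a ≠ 0 → b ≠ 0 → a + b ≠ 0 → min (v a) (v b) ≤ v (a + b))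
    (E : Fin d → Fin n → ℤ)
    (f : Fin n → MvPolynomial (Fin d) K) (g : MvPolynomial (Fin d) K)
    (hg : g ≠ 0) (hf : ∀ j, f j ≠ 0)
    (hinv : ∀ y : Fin d → K, (∀ i, y i ≠ 0) → eval y g ≠ 0 →
      (∀ j, eval y (f j) ≠ 0) →
      ∀ i, (∏ j, (eval y (f j) / eval y g) ^ E i j) = y i) :
    ∀ (η : Fin d → ℝ) (i : Fin d),
      (∑ j, (E i j : ℝ) * (Trop v (f j) η - Trop v g η)) = η i := by
  intro η i
  obtain ⟨w, hw⟩ := exists_addValuation_apply_eq hmul hadd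
  have hnum : ∀ j, f j ^ (E i j).toNat * g ^ (-E i j).toNat ≠ 0 := fun j =>
    mul_ne_zero (pow_ne_zero _ (hf j)) (pow_ne_zero _ hg)
  have hden : ∀ j, f j ^ (-E i j).toNat * g ^ (E i j).toNat ≠ 0 := fun j =>
    mul_ne_zero (pow_ne_zero _ (hf j)) (pow_ne_zero _ hg)
  have key := congrArg (Trop v · η) <| prod_pow_mul_pow_eq_X_mul_prod_pow_mul_pow hg hf (E i) i
    fun y hy hgy hfy => hinv y hy hgy hfy i
  rw [trop_prod η hw _ fun j _ => hnum j, trop_mul_s13 η hw (X_ne_zero i)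
    (Finset.prod_ne_zero_iff.mpr fun j _ => hden j), trop_X η hw,
    trop_prod η hw _ fun j _ => hden j] at key
  simp_rw [← trop_pow_mul_pow_sub_trop_pow_mul_pow η hw (hf _) hg]
  rw [Finset.sum_sub_distrib, key]
  ring

/-- Let `π : T^n → T^d` be the torus homomorphism with exponent matrix `E`, and let
`φ = (f_1/g, …, f_n/g) : T^d ⇢ T^n` be a rational inverse of the restriction of `π`
to a subvariety `X ⊆ T^n` (so that `π ∘ φ = id` wherever defined). Then
`Trop(π) ∘ Trop(φ)` is the identity on `ℝ^d`. Here `K` is algebraically closed and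
the valuation `v` is surjective onto `ℝ`. -/
theorem trop_pi_comp_trop_phi_eq_id {K : Type*} [Field K] [IsAlgClosed K]
    {n d : ℕ} (v : K → ℝ)
    (hmul : ∀ a b : K, a ≠ 0 → b ≠ 0 → v (a * b) = v a + v b)
    (hadd : ∀ a b : K, a ≠ 0 → b ≠ 0 → a + b ≠ 0 → min (v a) (v b) ≤ v (a + b))
    (hsurj : ∀ r : ℝ, ∃ a : K, a ≠ 0 ∧ v a = r)
    (E : Fin d → Fin n → ℤ)
    (f : Fin n → MvPolynomial (Fin d) K) (g : MvPolynomial (Fin d) K)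
    (hg : g ≠ 0) (hf : ∀ j, f j ≠ 0)
    (hinv : ∀ y : Fin d → K, (∀ i, y i ≠ 0) → eval y g ≠ 0 →
      (∀ j, eval y (f j) ≠ 0) →
      ∀ i, (∏ j, (eval y (f j) / eval y g) ^ E i j) = y i) :
    ∀ (η : Fin d → ℝ) (i : Fin d),
      (∑ j, (E i j : ℝ) * (Trop v (f j) η - Trop v g η)) = η i :=
  trop_pi_comp_trop_phi_eq_id_general v hmul hadd E f g hg hf hinv
end

section
/- Define φ : T^m × T^m × T^n × T^n → T^{m×n} by φ(u,x,v,y) = diag(u)(x·1^T + 1·y^T)diag(v), i.e. the matrix with entries u_i v_j (x_i + y_j). Then every matrix in the image of φ has rank at most 2, and the image is dense in the variety of m×n matrices of rank at most 2 (for m,n ≥ 2). -/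
/-!
A matrix has rank at most `r` exactly when it factors as `A * B` through `K ^ r`. The matrix
`φ(u,x,v,y)` is the product of the `m × 2` matrix with rows `(uᵢxᵢ, uᵢ)` and the `2 × n` matrix
with columns `(vⱼ, vⱼyⱼ)`; conversely every such product `A * B` whose entries are all nonzero is
`φ(u,x,v,y)` for `uᵢ = Aᵢ₁`, `xᵢ = Aᵢ₀ / Aᵢ₁`, `vⱼ = B₀ⱼ`, `yⱼ = B₁ⱼ / B₀ⱼ`. A polynomial vanishing
on the image of `φ` therefore pulls back along `(A, B) ↦ A * B` to a polynomial vanishing on the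
torus, which is zero because `K` is infinite.
-/

open MvPolynomial

/-- The matrix `φ(u,x,v,y) = diag(u)(x·1ᵀ + 1·yᵀ)diag(v)`, with entries
`u_i v_j (x_i + y_j)`. -/
def phiRank2 {K : Type*} [Field K] {m n : ℕ} (u x : Fin m → Kˣ)
    (v y : Fin n → Kˣ) : Matrix (Fin m) (Fin n) K :=
  Matrix.of fun i j => (u i : K) * (v j : K) * ((x i : K) + (y j : K))

theorem LinearMap.exists_eq_comp_of_finrank_range_le {K V W : Type*} [Field K]
    [AddCommGroup V] [Module K V] [AddCommGroup W] [Module K W] [FiniteDimensional K W]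
    (f : V →ₗ[K] W) {r : ℕ} (hf : Module.finrank K (LinearMap.range f) ≤ r) :
    ∃ (g : V →ₗ[K] Fin r → K) (h : (Fin r → K) →ₗ[K] W), f = h ∘ₗ g := by
  let e := (Module.finBasis K (LinearMap.range f)).equivFun
  let π : (Fin r → K) →ₗ[K] Fin _ → K := LinearMap.funLeft K K (Fin.castLE hf)
  obtain ⟨σ, hσ⟩ := π.exists_rightInverse_of_surjective
    (LinearMap.range_eq_top.2 (LinearMap.funLeft_surjective_of_injective _ _ _
      (Fin.castLE_injective hf)))
  refine ⟨σ ∘ₗ e.toLinearMap ∘ₗ f.rangeRestrict,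
    (LinearMap.range f).subtype ∘ₗ e.symm.toLinearMap ∘ₗ π, ?_⟩
  ext v
  simp [← LinearMap.comp_apply π σ, hσ]

theorem Matrix.rank_le_iff_exists_eq_mul {K m n : Type*} [Field K] [Fintype m] [Fintype n]
    [DecidableEq n] (M : Matrix m n K) (r : ℕ) :
    M.rank ≤ r ↔ ∃ (A : Matrix m (Fin r) K) (B : Matrix (Fin r) n K), M = A * B := by
  constructor
  · intro hM
    obtain ⟨g, h, hgh⟩ := M.mulVecLin.exists_eq_comp_of_finrank_range_le hM
    refine ⟨LinearMap.toMatrix' h, LinearMap.toMatrix' g, ?_⟩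
    rw [← LinearMap.toMatrix'_comp, ← hgh]
    exact (LinearMap.toMatrix'_toLin' M).symm
  · rintro ⟨A, B, rfl⟩
    exact (A.rank_mul_le_left B).trans (A.rank_le_card_width.trans_eq (Fintype.card_fin r))

theorem MvPolynomial.eval_matrix_mul_eq_zero_of_forall_ne_zero {K l m n : Type*} [Field K]
    [Infinite K] [Fintype l] (F : MvPolynomial (m × n) K)
    (hF : ∀ (A : Matrix m l K) (B : Matrix l n K), (∀ i k, A i k ≠ 0) → (∀ k j, B k j ≠ 0) →
      eval (fun ij => (A * B) ij.1 ij.2) F = 0)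
    (A : Matrix m l K) (B : Matrix l n K) : eval (fun ij => (A * B) ij.1 ij.2) F = 0 := by
  let G : MvPolynomial ((m × l) ⊕ (l × n)) K :=
    bind₁ (fun ij => ∑ k, X (.inl (ij.1, k)) * X (.inr (k, ij.2))) F
  have eval_G (p : (m × l) ⊕ (l × n) → K) :
      eval p G = eval (fun ij => (Matrix.of (fun i k => p (.inl (i, k))) *
        Matrix.of (fun k j => p (.inr (k, j)))) ij.1 ij.2) F := by
    refine (eval₂Hom_bind₁ _ _ _ _).trans (congrArg (eval · F) ?_)
    ext ij
    simp [Matrix.mul_apply]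
  have hG : G = 0 := by
    refine funext_set (fun _ => {0}ᶜ) (fun _ => (Set.finite_singleton 0).infinite_compl)
      fun p hp => ?_
    rw [eval_G, map_zero]
    exact hF _ _ (fun i k => hp (.inl (i, k)) trivial) (fun k j => hp (.inr (k, j)) trivial)
  have := congrArg (eval (Sum.elim (fun ik => A ik.1 ik.2) (fun kj => B kj.1 kj.2))) hG
  rwa [eval_G, map_zero] at this

theorem phiRank2_eq_mul {K : Type*} [Field K] {m n : ℕ} (u x : Fin m → Kˣ) (v y : Fin n → Kˣ) :
    phiRank2 u x v y = Matrix.of (fun i k => ![(u i * x i : K), u i] k) *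
      Matrix.of (fun k j => ![(v j : K), v j * y j] k) := by
  ext i j
  simp only [phiRank2, Matrix.of_apply, Matrix.mul_apply, Fin.sum_univ_two,
    Matrix.cons_val_zero, Matrix.cons_val_one]
  ring

theorem exists_phiRank2_eq_mul {K : Type*} [Field K] {m n : ℕ} {A : Matrix (Fin m) (Fin 2) K}
    {B : Matrix (Fin 2) (Fin n) K} (hA : ∀ i k, A i k ≠ 0) (hB : ∀ k j, B k j ≠ 0) :
    ∃ (u x : Fin m → Kˣ) (v y : Fin n → Kˣ), phiRank2 u x v y = A * B := by
  refine ⟨fun i => Units.mk0 _ (hA i 1), fun i => Units.mk0 _ (div_ne_zero (hA i 0) (hA i 1)),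
    fun j => Units.mk0 _ (hB 0 j), fun j => Units.mk0 _ (div_ne_zero (hB 1 j) (hB 0 j)), ?_⟩
  ext i j
  have hAi := hA i 1
  have hBj := hB 0 j
  simp only [phiRank2, Units.val_mk0, Matrix.of_apply, Matrix.mul_apply, Fin.sum_univ_two]
  field_simp

theorem phiRank2_rank_le_two_and_dominant_general {K : Type*} [Field K] [IsAlgClosed K]
    {m n : ℕ} :
    (∀ (u x : Fin m → Kˣ) (v y : Fin n → Kˣ), (phiRank2 u x v y).rank ≤ 2) ∧
    (∀ F : MvPolynomial (Fin m × Fin n) K,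
      (∀ (u x : Fin m → Kˣ) (v y : Fin n → Kˣ),
        eval (fun ij => phiRank2 u x v y ij.1 ij.2) F = 0) →
      ∀ M : Matrix (Fin m) (Fin n) K, M.rank ≤ 2 →
        eval (fun ij => M ij.1 ij.2) F = 0) := by
  refine ⟨fun u x v y => ?_, fun F hF M hM => ?_⟩
  · rw [phiRank2_eq_mul]
    exact (Matrix.rank_le_iff_exists_eq_mul _ 2).2 ⟨_, _, rfl⟩
  · obtain ⟨A, B, rfl⟩ := (M.rank_le_iff_exists_eq_mul 2).1 hM
    refine F.eval_matrix_mul_eq_zero_of_forall_ne_zero (fun A B hA hB => ?_) A B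
    obtain ⟨u, x, v, y, hφ⟩ := exists_phiRank2_eq_mul hA hB
    rw [← hφ]
    exact hF u x v y

/-- Every matrix `diag(u)(x·1ᵀ + 1·yᵀ)diag(v)` has rank at most 2, and (for
`m, n ≥ 2` over an algebraically closed field) the image of this map is Zariski
dense in the variety of `m × n` matrices of rank at most 2: any polynomial
vanishing on the image vanishes on every matrix of rank at most 2. -/
theorem phiRank2_rank_le_two_and_dominant {K : Type*} [Field K] [IsAlgClosed K]
    {m n : ℕ} (hm : 2 ≤ m) (hn : 2 ≤ n) :
    (∀ (u x : Fin m → Kˣ) (v y : Fin n → Kˣ), (phiRank2 u x v y).rank ≤ 2) ∧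
    (∀ F : MvPolynomial (Fin m × Fin n) K,
      (∀ (u x : Fin m → Kˣ) (v y : Fin n → Kˣ),
        eval (fun ij => phiRank2 u x v y ij.1 ij.2) F = 0) →
      ∀ M : Matrix (Fin m) (Fin n) K, M.rank ≤ 2 →
        eval (fun ij => M ij.1 ij.2) F = 0) :=
  phiRank2_rank_le_two_and_dominant_general
end
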